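/- arXiv:2108.02124 — 4 statements merged into one kernel-verified Lean document; each statement's English description precedes it below -/
import Mathlib

section
/- The divergence of the Fierz tensor in its first index equals minus the linearized Einstein tensor: ∂_c F^c{}_{ab} = −G_{ab}, where G_{ab} = R_{ab} − (1/2)η_{ab}R is built from the linearized Ricci tensor R_{ab} = (1/2)(∂_c∂_a h^c{}_b + ∂_c∂_b h^c{}_a − □h_{ab} − ∂_a∂_b h) and R = η^{ab}R_{ab}. -/
set_option maxHeartbeats 2000000
noncomputable section

/-- Minkowski metric `diag(+1,-1,-1,-1)` on `Fin 4` (same matrix raises/lowers indices). -/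
def eta (a b : Fin 4) : ℝ := if a = b then (if a = 0 then 1 else -1) else 0

/-- Partial derivative in the coordinate direction `a` on `ℝ⁴ = (Fin 4 → ℝ)`. -/
def pd (a : Fin 4) (f : (Fin 4 → ℝ) → ℝ) : (Fin 4 → ℝ) → ℝ :=
  fun x => fderiv ℝ f x (Pi.single a 1)

/-- Trace `h = η^{ab} h_{ab}`. -/
def trH (h : (Fin 4 → ℝ) → Fin 4 → Fin 4 → ℝ) : (Fin 4 → ℝ) → ℝ :=
  fun x => ∑ a : Fin 4, ∑ b : Fin 4, eta a b * h x a b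

/-- Divergence `∂_d h^d{}_a`. -/
def divH (h : (Fin 4 → ℝ) → Fin 4 → Fin 4 → ℝ) (a : Fin 4) : (Fin 4 → ℝ) → ℝ :=
  fun x => ∑ d : Fin 4, ∑ d' : Fin 4, eta d d' * pd d (fun y => h y d' a) x

/-- The Fierz tensor of `h_{ab}`. -/
def Fierz (h : (Fin 4 → ℝ) → Fin 4 → Fin 4 → ℝ) (a b c : Fin 4) : (Fin 4 → ℝ) → ℝ :=
  fun x => (1/2) * (pd a (fun y => h y b c) x - pd b (fun y => h y a c) x
    + divH h a x * eta b c - divH h b x * eta a c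
    - pd a (trH h) x * eta b c + pd b (trH h) x * eta a c)

/-- Second partial derivative `∂_a ∂_b f`. -/
def pd2 (a b : Fin 4) (f : (Fin 4 → ℝ) → ℝ) : (Fin 4 → ℝ) → ℝ :=
  pd a (pd b f)

/-- Linearized Ricci tensor
`R_{ab} = (1/2)(∂_c∂_a h^c{}_b + ∂_c∂_b h^c{}_a − □h_{ab} − ∂_a∂_b h)`. -/
def Ric (h : (Fin 4 → ℝ) → Fin 4 → Fin 4 → ℝ) (a b : Fin 4) : (Fin 4 → ℝ) → ℝ :=
  fun x => (1/2) *
    ((∑ c : Fin 4, ∑ c' : Fin 4, eta c c' * pd2 c a (fun y => h y c' b) x)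
      + (∑ c : Fin 4, ∑ c' : Fin 4, eta c c' * pd2 c b (fun y => h y c' a) x)
      - (∑ c : Fin 4, ∑ c' : Fin 4, eta c c' * pd2 c c' (fun y => h y a b) x)
      - pd2 a b (trH h) x)

/-- Linearized Ricci scalar `R = η^{ab} R_{ab}`. -/
def Rsc (h : (Fin 4 → ℝ) → Fin 4 → Fin 4 → ℝ) : (Fin 4 → ℝ) → ℝ :=
  fun x => ∑ a : Fin 4, ∑ b : Fin 4, eta a b * Ric h a b x

lemma pd_smooth {f : (Fin 4 → ℝ) → ℝ} (hf : ContDiff ℝ (⊤ : ℕ∞) f) (a : Fin 4) :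
    ContDiff ℝ (⊤ : ℕ∞) (pd a f) :=
  (hf.fderiv_right (by simp)).clm_apply contDiff_const

lemma pd_pd_comm {f : (Fin 4 → ℝ) → ℝ} (hf : ContDiff ℝ (⊤ : ℕ∞) f) (i j : Fin 4) (x : Fin 4 → ℝ) :
    pd i (pd j f) x = pd j (pd i f) x := by
  have hd : Differentiable ℝ (fderiv ℝ f) := (hf.fderiv_right (m := 1) (WithTop.coe_le_coe.mpr le_top)).differentiable one_ne_zero
  have H : ∀ (v : Fin 4 → ℝ) (y : Fin 4 → ℝ), fderiv ℝ (fun z => fderiv ℝ f z v) y =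
      (ContinuousLinearMap.apply ℝ ℝ v).comp (fderiv ℝ (fderiv ℝ f) y) :=
    fun v y => (((ContinuousLinearMap.apply ℝ ℝ v).hasFDerivAt).comp y (hd y).hasFDerivAt).fderiv
  have hs : IsSymmSndFDerivAt ℝ f x := hf.contDiffAt.isSymmSndFDerivAt (by simp; exact WithTop.coe_le_coe.mpr le_top)
  have pdeq : ∀ (a : Fin 4) (g : (Fin 4 → ℝ) → ℝ), pd a g = fun y => fderiv ℝ g y (Pi.single a 1) :=
    fun _ _ => rfl
  simp only [pdeq, H, ContinuousLinearMap.comp_apply, ContinuousLinearMap.apply_apply]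
  exact hs _ _

lemma pd_sum_mul (F : Fin 4 → Fin 4 → (Fin 4 → ℝ) → ℝ) (k : Fin 4 → Fin 4 → ℝ)
    (hF : ∀ i j, ContDiff ℝ (⊤ : ℕ∞) (F i j)) (c : Fin 4) (x : Fin 4 → ℝ) :
    pd c (fun y => ∑ i : Fin 4, ∑ j : Fin 4, k i j * F i j y) x
      = ∑ i : Fin 4, ∑ j : Fin 4, k i j * pd c (F i j) x := by
  have H : HasFDerivAt (fun y => ∑ i : Fin 4, ∑ j : Fin 4, k i j * F i j y)
      (∑ i : Fin 4, ∑ j : Fin 4, k i j • fderiv ℝ (F i j) x) x :=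
    HasFDerivAt.fun_sum fun i _ => HasFDerivAt.fun_sum fun j _ =>
      (((hF i j).differentiable (by simp) x).hasFDerivAt).const_mul (k i j)
  simp only [pd, H.fderiv, ContinuousLinearMap.sum_apply, ContinuousLinearMap.smul_apply,
    smul_eq_mul]

lemma pd_lin (f1 f2 f3 f4 f5 f6 : (Fin 4 → ℝ) → ℝ) (k1 k2 : ℝ)
    (h1 : ContDiff ℝ (⊤ : ℕ∞) f1) (h2 : ContDiff ℝ (⊤ : ℕ∞) f2) (h3 : ContDiff ℝ (⊤ : ℕ∞) f3)
    (h4 : ContDiff ℝ (⊤ : ℕ∞) f4) (h5 : ContDiff ℝ (⊤ : ℕ∞) f5) (h6 : ContDiff ℝ (⊤ : ℕ∞) f6)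
    (c : Fin 4) (x : Fin 4 → ℝ) :
    pd c (fun y => (1/2) * (f1 y - f2 y + f3 y * k1 - f4 y * k2 - f5 y * k1 + f6 y * k2)) x
      = (1/2) * (pd c f1 x - pd c f2 x + pd c f3 x * k1 - pd c f4 x * k2
          - pd c f5 x * k1 + pd c f6 x * k2) := by
  have H : HasFDerivAt
      (fun y => (1/2 : ℝ) * (f1 y - f2 y + f3 y * k1 - f4 y * k2 - f5 y * k1 + f6 y * k2))
      ((1/2 : ℝ) • (fderiv ℝ f1 x - fderiv ℝ f2 x + k1 • fderiv ℝ f3 x - k2 • fderiv ℝ f4 x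
        - k1 • fderiv ℝ f5 x + k2 • fderiv ℝ f6 x)) x := by
    have d1 := (h1.differentiable (by simp) x).hasFDerivAt
    have d2 := (h2.differentiable (by simp) x).hasFDerivAt
    have d3 := ((h3.differentiable (by simp) x).hasFDerivAt).mul_const k1
    have d4 := ((h4.differentiable (by simp) x).hasFDerivAt).mul_const k2
    have d5 := ((h5.differentiable (by simp) x).hasFDerivAt).mul_const k1
    have d6 := ((h6.differentiable (by simp) x).hasFDerivAt).mul_const k2
    exact (((((d1.sub d2).add d3).sub d4).sub d5).add d6).const_mul (1/2)
  simp only [pd, H.fderiv, ContinuousLinearMap.smul_apply, ContinuousLinearMap.add_apply,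
    ContinuousLinearMap.sub_apply, smul_eq_mul]
  ring

/-- `∂_c F^c{}_{ab} = −G_{ab}` with `G_{ab} = R_{ab} − (1/2)η_{ab}R`. -/
theorem fierz_divergence_first_index
    (h : (Fin 4 → ℝ) → Fin 4 → Fin 4 → ℝ)
    (hsm : ∀ a b : Fin 4, ContDiff ℝ (⊤ : ℕ∞) fun x => h x a b)
    (hsym : ∀ x, ∀ a b : Fin 4, h x a b = h x b a) :
    ∀ x, ∀ a b : Fin 4,
      (∑ c : Fin 4, ∑ c' : Fin 4, eta c c' * pd c (fun y => Fierz h c' a b y) x)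
        = - (Ric h a b x - (1/2) * eta a b * Rsc h x) := by
  intro x a b
  have htr : ContDiff ℝ (⊤ : ℕ∞) (trH h) := by
    show ContDiff ℝ (⊤ : ℕ∞) (fun x => ∑ i : Fin 4, ∑ j : Fin 4, eta i j * h x i j)
    exact ContDiff.sum fun i _ => ContDiff.sum fun j _ => contDiff_const.mul (hsm i j)
  have hdiv : ∀ a : Fin 4, ContDiff ℝ (⊤ : ℕ∞) (divH h a) := by
    intro a
    show ContDiff ℝ (⊤ : ℕ∞) (fun x => ∑ d : Fin 4, ∑ d' : Fin 4, eta d d' * pd d (fun y => h y d' a) x)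
    exact ContDiff.sum fun d _ => ContDiff.sum fun d' _ =>
      contDiff_const.mul (pd_smooth (hsm d' a) d)
  have pdtr : ∀ (j : Fin 4), pd j (trH h)
      = fun z => ∑ e : Fin 4, ∑ f : Fin 4, eta e f * pd j (fun y => h y e f) z := by
    intro j; funext z
    exact pd_sum_mul (fun e f => fun y => h y e f) eta hsm j z
  have ETT : ∀ (i j : Fin 4), pd i (pd j (trH h)) x
      = ∑ e : Fin 4, ∑ f : Fin 4, eta e f * pd i (pd j (fun y => h y e f)) x := by
    intro i j
    rw [pdtr j]
    exact pd_sum_mul (fun e f => pd j (fun y => h y e f)) eta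
      (fun e f => pd_smooth (hsm e f) j) i x
  have EDV : ∀ (c a : Fin 4), pd c (divH h a) x
      = ∑ d : Fin 4, ∑ d' : Fin 4, eta d d' * pd c (pd d (fun y => h y d' a)) x := by
    intro c a
    exact pd_sum_mul (fun d d' => pd d (fun y => h y d' a)) eta
      (fun d d' => pd_smooth (hsm d' a) d) c x
  have EF : ∀ c c' : Fin 4, pd c (fun y => Fierz h c' a b y) x
      = (1/2) * (pd c (pd c' (fun y => h y a b)) x - pd c (pd a (fun y => h y c' b)) x
        + (∑ d : Fin 4, ∑ d' : Fin 4, eta d d' * pd c (pd d (fun y => h y d' c')) x) * eta a b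
        - (∑ d : Fin 4, ∑ d' : Fin 4, eta d d' * pd c (pd d (fun y => h y d' a)) x) * eta c' b
        - (∑ e : Fin 4, ∑ f : Fin 4, eta e f * pd c (pd c' (fun y => h y e f)) x) * eta a b
        + (∑ e : Fin 4, ∑ f : Fin 4, eta e f * pd c (pd a (fun y => h y e f)) x) * eta c' b) := by
    intro c c'
    have e0 : (fun y => Fierz h c' a b y)
        = (fun y => (1/2) * ((pd c' (fun z => h z a b)) y - (pd a (fun z => h z c' b)) y
          + (divH h c') y * eta a b - (divH h a) y * eta c' b
          - (pd c' (trH h)) y * eta a b + (pd a (trH h)) y * eta c' b)) := rfl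
    rw [e0, pd_lin _ _ _ _ _ _ _ _ (pd_smooth (hsm a b) c') (pd_smooth (hsm c' b) a)
      (hdiv c') (hdiv a) (pd_smooth htr c') (pd_smooth htr a) c x,
      EDV c c', EDV c a, ETT c c', ETT c a]
  have C : ∀ i j k l : Fin 4, pd i (pd j (fun y => h y k l)) x
      = pd j (pd i (fun y => h y k l)) x :=
    fun i j k l => pd_pd_comm (hsm k l) i j x
  have S : ∀ k l i j : Fin 4, pd i (pd j (fun y => h y k l)) x
      = pd i (pd j (fun y => h y l k)) x := by
    intro k l i j
    have e : (fun y => h y k l) = (fun y => h y l k) := funext fun y => hsym y k l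
    rw [e]
  simp only [Ric, Rsc, pd2, EF, ETT]
  fin_cases a <;> fin_cases b <;>
    simp only [Fin.sum_univ_four] <;>
    simp [eta] <;>
    simp only [C 1 0, C 2 0, C 2 1, C 3 0, C 3 1, C 3 2,
      S 1 0, S 2 0, S 2 1, S 3 0, S 3 1, S 3 2] <;>
    ring
end
end

section
/- If the Fierz tensor of a smooth symmetric field h_{ab} vanishes on a spacetime domain Ω that is (smoothly) simply connected (so that every closed 1-form is exact, H¹_dR(Ω)=0), then h_{ab} = ∂_a∂_b φ on Ω for some smooth function φ; i.e. h_{ab} is zero up to a scalar gauge transformation. -/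
noncomputable section

lemma eta_offdiag {a b : Fin 4} (hab : a ≠ b) : eta a b = 0 := by
  simp [eta, hab]

lemma eta_sq (a : Fin 4) : eta a a * eta a a = 1 := by
  unfold eta
  simp only [if_pos rfl]
  split_ifs <;> norm_num

/-- if the Fierz tensor vanishes on a domain `Ω` on which every closed
1-form is exact (`H¹_dR(Ω) = 0`), then `h_{ab} = ∂_a∂_b φ` on `Ω`. -/
theorem fierz_zero_implies_pure_scalar_gauge
    (Ω : Set (Fin 4 → ℝ)) (hΩ : IsOpen Ω)
    (hH1 : ∀ v : (Fin 4 → ℝ) → Fin 4 → ℝ,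
      (∀ a : Fin 4, ContDiff ℝ (⊤ : ℕ∞) fun x => v x a) →
      (∀ x ∈ Ω, ∀ a b : Fin 4,
        pd a (fun y => v y b) x = pd b (fun y => v y a) x) →
      ∃ g : (Fin 4 → ℝ) → ℝ, ContDiff ℝ (⊤ : ℕ∞) g ∧ ∀ x ∈ Ω, ∀ a : Fin 4, v x a = pd a g x)
    (h : (Fin 4 → ℝ) → Fin 4 → Fin 4 → ℝ)
    (hsm : ∀ a b : Fin 4, ContDiff ℝ (⊤ : ℕ∞) fun x => h x a b)
    (hsym : ∀ x, ∀ a b : Fin 4, h x a b = h x b a)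
    (hF : ∀ x ∈ Ω, ∀ a b c : Fin 4, Fierz h a b c x = 0) :
    ∃ φ : (Fin 4 → ℝ) → ℝ, ContDiff ℝ (⊤ : ℕ∞) φ ∧
      ∀ x ∈ Ω, ∀ a b : Fin 4, h x a b = pd a (pd b φ) x := by
  have hdiff : ∀ (a b : Fin 4) (x : Fin 4 → ℝ), DifferentiableAt ℝ (fun y => h y a b) x :=
    fun a b x => ((hsm a b).differentiable (by simp)).differentiableAt
  have hsymf : ∀ a b : Fin 4, (fun y => h y a b) = (fun y => h y b a) :=
    fun a b => funext fun y => hsym y a b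
  -- pd commutes with the finite sums defining trH
  have pd_trH : ∀ (a : Fin 4) (x : Fin 4 → ℝ),
      pd a (trH h) x = ∑ p : Fin 4, ∑ q : Fin 4, eta p q * pd a (fun y => h y p q) x := by
    intro a x
    have hin : ∀ p : Fin 4, DifferentiableAt ℝ (fun y => ∑ q : Fin 4, eta p q * h y p q) x :=
      fun p => DifferentiableAt.fun_sum (fun q _ => (hdiff p q x).const_mul _)
    have e1 : fderiv ℝ (trH h) x =
        ∑ p : Fin 4, fderiv ℝ (fun y => ∑ q : Fin 4, eta p q * h y p q) x := by
      unfold trH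
      exact fderiv_fun_sum (fun p _ => hin p)
    have e2 : ∀ p : Fin 4, fderiv ℝ (fun y => ∑ q : Fin 4, eta p q * h y p q) x
        = ∑ q : Fin 4, eta p q • fderiv ℝ (fun y => h y p q) x := by
      intro p
      rw [fderiv_fun_sum (fun q _ => (hdiff p q x).const_mul _)]
      exact Finset.sum_congr rfl fun q _ => fderiv_const_mul (hdiff p q x) _
    unfold pd
    rw [e1]
    simp only [ContinuousLinearMap.sum_apply]
    refine Finset.sum_congr rfl fun p _ => ?_
    rw [e2 p]
    simp [ContinuousLinearMap.sum_apply]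
  -- trace diagonalized
  have tr_diag : ∀ (a : Fin 4) (x : Fin 4 → ℝ),
      pd a (trH h) x = ∑ p : Fin 4, eta p p * pd a (fun y => h y p p) x := by
    intro a x
    rw [pd_trH a x]
    refine Finset.sum_congr rfl fun p _ => ?_
    rw [Finset.sum_eq_single p]
    · intro q _ hq
      rw [eta_offdiag (Ne.symm hq), zero_mul]
    · intro hp; exact absurd (Finset.mem_univ p) hp
  -- divergence diagonalized
  have divH_eq : ∀ (a : Fin 4) (x : Fin 4 → ℝ),
      divH h a x = ∑ d : Fin 4, eta d d * pd d (fun y => h y d a) x := by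
    intro a x
    unfold divH
    refine Finset.sum_congr rfl fun d _ => ?_
    rw [Finset.sum_eq_single d]
    · intro q _ hq
      rw [eta_offdiag (Ne.symm hq), zero_mul]
    · intro hp; exact absurd (Finset.mem_univ d) hp
  -- columns of h are closed 1-forms on Ω
  have closed : ∀ x ∈ Ω, ∀ a b c : Fin 4,
      pd a (fun y => h y b c) x = pd b (fun y => h y a c) x := by
    intro x hx a b c
    set D : Fin 4 → ℝ := fun a => divH h a x - pd a (trH h) x with hD
    have key : ∀ a b c : Fin 4,
        pd a (fun y => h y b c) x - pd b (fun y => h y a c) x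
          + D a * eta b c - D b * eta a c = 0 := by
      intro a b c
      have hf := hF x hx a b c
      unfold Fierz at hf
      simp only [hD]
      nlinarith [hf]
    have Dzero : ∀ a : Fin 4, D a = 0 := by
      intro a
      have hT : ∀ d : Fin 4, d ≠ a →
          pd d (fun y => h y d a) x - pd a (fun y => h y d d) x = D a * eta d d := by
        intro d hd
        have k := key d a d
        rw [hsymf a d] at k
        rw [eta_offdiag (Ne.symm hd)] at k
        linarith
      have val : ∀ d : Fin 4,
          eta d d * (pd d (fun y => h y d a) x - pd a (fun y => h y d d) x)
            = if d = a then 0 else D a := by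
        intro d
        by_cases hd : d = a
        · subst hd; simp
        · rw [hT d hd, if_neg hd]
          linear_combination D a * eta_sq d
      have expand : D a = ∑ d : Fin 4, (if d = a then (0:ℝ) else D a) := by
        have e : D a = ∑ d : Fin 4,
            eta d d * (pd d (fun y => h y d a) x - pd a (fun y => h y d d) x) := by
          simp only [hD]
          rw [divH_eq a x, tr_diag a x, ← Finset.sum_sub_distrib]
          exact Finset.sum_congr rfl fun d _ => (mul_sub _ _ _).symm
        conv_lhs => rw [e]
        exact Finset.sum_congr rfl fun d _ => val d
      have sum3 : ∑ d : Fin 4, (if d = a then (0:ℝ) else D a) = 3 * D a := by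
        fin_cases a <;> simp [Fin.sum_univ_four] <;> ring
      rw [sum3] at expand
      linarith
    have k := key a b c
    simp only [Dzero, zero_mul] at k
    linarith
  -- potentials for each column
  have hg : ∀ c : Fin 4, ∃ g : (Fin 4 → ℝ) → ℝ, ContDiff ℝ (⊤ : ℕ∞) g ∧
      ∀ x ∈ Ω, ∀ a : Fin 4, h x a c = pd a g x :=
    fun c => hH1 (fun x a => h x a c) (fun a => hsm a c) (fun x hx a b => closed x hx a b c)
  choose g hg1 hg2 using hg
  -- g is itself a closed 1-form on Ω
  obtain ⟨φ, hφ1, hφ2⟩ := hH1 (fun x a => g a x) (fun a => hg1 a) (by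
    intro x hx a b
    show pd a (fun y => g b y) x = pd b (fun y => g a y) x
    have e1 : h x a b = pd a (g b) x := hg2 b x hx a
    have e2 : h x b a = pd b (g a) x := hg2 a x hx b
    have := hsym x a b
    simpa using e1 ▸ e2 ▸ this)
  refine ⟨φ, hφ1, fun x hx a b => ?_⟩
  have e1 : h x a b = pd a (g b) x := hg2 b x hx a
  have e2 : pd a (g b) x = pd a (pd b φ) x := by
    unfold pd
    congr 1
    apply Filter.EventuallyEq.fderiv_eq
    filter_upwards [hΩ.mem_nhds hx] with y hy
    exact hφ2 y hy b
  rw [e1, e2]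
end
end

section
/- If a tensor field E_{abc} is antisymmetric in its first two indices and satisfies ∂_a E_{bcd} + ∂_b E_{cad} + ∂_c E_{abd} = 0, then ∂_c Ê_{ab}{}^c = 0 where Ê_{abc} = E_{abc} − (E_a η_{bc} − E_b η_{ac}) and E_a = E_{ab}{}^b; i.e. the 'inverse-trace-corrected' tensor is divergence-free in its last index. -/
noncomputable section

/-- Trace `E_a = E_{ab}{}^b`. -/
def Etr (E : (Fin 4 → ℝ) → Fin 4 → Fin 4 → Fin 4 → ℝ) (x : Fin 4 → ℝ) (a : Fin 4) : ℝ :=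
  ∑ e : Fin 4, ∑ e' : Fin 4, eta e e' * E x a e e'

/-- The trace-corrected tensor `Ê_{abc} = E_{abc} − (E_a η_{bc} − E_b η_{ac})`. -/
def Ehat (E : (Fin 4 → ℝ) → Fin 4 → Fin 4 → Fin 4 → ℝ) (x : Fin 4 → ℝ)
    (a b c : Fin 4) : ℝ :=
  E x a b c - (Etr E x a * eta b c - Etr E x b * eta a c)

private lemma etasq (c b : Fin 4) : (∑ c' : Fin 4, eta c c' * eta b c') = if c = b then 1 else 0 := by
  rcases eq_or_ne c b with h | h
  · subst h
    have hh : ∀ c' : Fin 4, eta c c' * eta c c' = if c = c' then 1 else 0 := by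
      intro c'; unfold eta; split_ifs <;> norm_num
    simp [hh]
  · have hh : ∀ c' : Fin 4, eta c c' * eta b c' = 0 := by
      intro c'; unfold eta; split_ifs with h1 h2 <;> simp_all
    simp [hh, h]

/-- if `E_{abc} = −E_{bac}` and
`∂_a E_{bcd} + ∂_b E_{cad} + ∂_c E_{abd} = 0`, then `∂_c Ê_{ab}{}^c = 0`. -/
theorem trace_corrected_divergence_free
    (E : (Fin 4 → ℝ) → Fin 4 → Fin 4 → Fin 4 → ℝ)
    (hsm : ∀ a b c : Fin 4, ContDiff ℝ (⊤ : ℕ∞) fun x => E x a b c)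
    (hanti : ∀ x, ∀ a b c : Fin 4, E x a b c = - E x b a c)
    (hclosed : ∀ x, ∀ a b c d : Fin 4,
      pd a (fun y => E y b c d) x + pd b (fun y => E y c a d) x
        + pd c (fun y => E y a b d) x = 0) :
    ∀ x, ∀ a b : Fin 4,
      (∑ c : Fin 4, ∑ c' : Fin 4, eta c c' * pd c (fun y => Ehat E y a b c') x) = 0 := by

  intro x a b
  have hd : ∀ a b c : Fin 4, Differentiable ℝ fun x => E x a b c :=
    fun a b c => (hsm a b c).differentiable (by simp)
  have pdanti : ∀ (c a b d : Fin 4), pd c (fun y => E y a b d) x = - pd c (fun y => E y b a d) x := by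
    intro c a b d
    have he : (fun y => E y a b d) = fun y => -(E y b a d) := funext fun y => hanti y a b d
    rw [he]
    unfold pd
    rw [fderiv_fun_neg]
    simp
  have hEtr : ∀ f : Fin 4, Differentiable ℝ fun y => Etr E y f := by
    intro f
    unfold Etr
    exact Differentiable.fun_sum fun e _ => Differentiable.fun_sum fun e' _ => (hd f e e').const_mul _
  have pdEhat : ∀ (c a b c' : Fin 4),
      pd c (fun y => Ehat E y a b c') x
        = pd c (fun y => E y a b c') x
          - (pd c (fun y => Etr E y a) x * eta b c'
             - pd c (fun y => Etr E y b) x * eta a c') := by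
    intro c a b c'
    unfold Ehat pd
    rw [fderiv_fun_sub ((hd a b c') x)
      ((((hEtr a).mul_const _).fun_sub ((hEtr b).mul_const _)) x)]
    rw [fderiv_fun_sub (((hEtr a).mul_const _) x) (((hEtr b).mul_const _) x)]
    rw [fderiv_mul_const ((hEtr a) x), fderiv_mul_const ((hEtr b) x)]
    simp [mul_comm]
  have pdEtr : ∀ (c f : Fin 4),
      pd c (fun y => Etr E y f) x
        = ∑ e : Fin 4, ∑ e' : Fin 4, eta e e' * pd c (fun y => E y f e e') x := by
    intro c f
    unfold Etr pd
    rw [fderiv_fun_sum (fun e _ => DifferentiableAt.fun_sum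
      (fun e' _ => ((hd f e e').const_mul (eta e e')) x))]
    simp only [ContinuousLinearMap.sum_apply]
    refine Finset.sum_congr rfl fun e _ => ?_
    rw [fderiv_fun_sum (fun e' _ => ((hd f e e').const_mul (eta e e')) x)]
    simp only [ContinuousLinearMap.sum_apply]
    refine Finset.sum_congr rfl fun e' _ => ?_
    rw [fderiv_const_mul ((hd f e e') x)]
    simp
  have H : (∑ c : Fin 4, ∑ c' : Fin 4, eta c c' * pd a (fun y => E y b c c') x)
      - (∑ c : Fin 4, ∑ c' : Fin 4, eta c c' * pd b (fun y => E y a c c') x)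
      + (∑ c : Fin 4, ∑ c' : Fin 4, eta c c' * pd c (fun y => E y a b c') x) = 0 := by
    have h1 : ∀ c c' : Fin 4,
        eta c c' * pd a (fun y => E y b c c') x - eta c c' * pd b (fun y => E y a c c') x
          + eta c c' * pd c (fun y => E y a b c') x = 0 := by
      intro c c'
      have h2 := hclosed x a b c c'
      have h3 := pdanti b c a c'
      linear_combination eta c c' * h2 - eta c c' * h3
    have h4 : (∑ c : Fin 4, ∑ c' : Fin 4,
        (eta c c' * pd a (fun y => E y b c c') x - eta c c' * pd b (fun y => E y a c c') x
          + eta c c' * pd c (fun y => E y a b c') x)) = 0 := by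
      simp only [h1, Finset.sum_const_zero]
    simp only [Finset.sum_sub_distrib, Finset.sum_add_distrib] at h4
    linarith [h4]
  have expand : ∀ c : Fin 4,
      (∑ c' : Fin 4, eta c c' * pd c (fun y => Ehat E y a b c') x)
        = (∑ c' : Fin 4, eta c c' * pd c (fun y => E y a b c') x)
          - pd c (fun y => Etr E y a) x * (if c = b then 1 else 0)
          + pd c (fun y => Etr E y b) x * (if c = a then 1 else 0) := by
    intro c
    rw [← etasq c b, ← etasq c a]
    have h5 : ∀ c' : Fin 4, eta c c' * pd c (fun y => Ehat E y a b c') x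
        = eta c c' * pd c (fun y => E y a b c') x
          - pd c (fun y => Etr E y a) x * (eta c c' * eta b c')
          + pd c (fun y => Etr E y b) x * (eta c c' * eta a c') := by
      intro c'
      rw [pdEhat]
      ring
    simp only [h5]
    rw [Finset.sum_add_distrib, Finset.sum_sub_distrib, ← Finset.mul_sum, ← Finset.mul_sum]
  simp only [expand]
  rw [Finset.sum_add_distrib, Finset.sum_sub_distrib]
  simp only [mul_ite, mul_one, mul_zero, Finset.sum_ite_eq', Finset.mem_univ, if_true]
  have e1 := pdEtr a b
  have e2 := pdEtr b a
  linarith [H, e1, e2]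
end
end

section
/- Let h_{ab} and k_{ab} be smooth symmetric tensor fields on ℝ⁴ with Fierz tensors F_{abc} and G_{abc}. If both are vacuum solutions of the linearized Einstein equations, ∂_c F^{cab} = 0 and ∂_c G^{cab} = 0, then the current J^c = F^{cab}k_{ab} − G^{cab}h_{ab} is conserved: ∂_c J^c = 0. -/
noncomputable section

/-- The bilinear current `J^c = F^{cab} k_{ab} − G^{cab} h_{ab}`, where `F`, `G`
are the Fierz tensors of `h`, `k`. -/
def Jcur (h k : (Fin 4 → ℝ) → Fin 4 → Fin 4 → ℝ) (c : Fin 4) : (Fin 4 → ℝ) → ℝ :=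
  fun x =>
    (∑ c' : Fin 4, ∑ a : Fin 4, ∑ a' : Fin 4, ∑ b : Fin 4, ∑ b' : Fin 4,
      eta c c' * eta a a' * eta b b' * Fierz h c' a' b' x * k x a b)
    - (∑ c' : Fin 4, ∑ a : Fin 4, ∑ a' : Fin 4, ∑ b : Fin 4, ∑ b' : Fin 4,
      eta c c' * eta a a' * eta b b' * Fierz k c' a' b' x * h x a b)

namespace BCCaux

/-- Diagonal sign of the Minkowski metric. -/
def sgn (a : Fin 4) : ℝ := if a = 0 then 1 else -1

lemma eta_diag (a : Fin 4) : eta a a = sgn a := by simp [eta, sgn]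

lemma eta_ne {a b : Fin 4} (hab : a ≠ b) : eta a b = 0 := by simp [eta, hab]

lemma sum_eta (c : Fin 4) (f : Fin 4 → ℝ) :
    ∑ c' : Fin 4, eta c c' * f c' = sgn c * f c := by
  rw [Finset.sum_eq_single c]
  · rw [eta_diag]
  · intro b _ hb; rw [eta_ne (Ne.symm hb), zero_mul]
  · simp

/-- Algebraic mirror of the Fierz tensor at a point, in terms of first derivatives. -/
def Fp (P : Fin 4 → Fin 4 → Fin 4 → ℝ) (a b c : Fin 4) : ℝ :=
  (1/2) * (P a b c - P b a c
    + (∑ d : Fin 4, sgn d * P d d a) * eta b c - (∑ d : Fin 4, sgn d * P d d b) * eta a c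
    - (∑ p : Fin 4, sgn p * P a p p) * eta b c + (∑ p : Fin 4, sgn p * P b p p) * eta a c)

lemma e00 : eta 0 0 = 1 := rfl
lemma e01 : eta 0 1 = 0 := rfl
lemma e02 : eta 0 2 = 0 := rfl
lemma e03 : eta 0 3 = 0 := rfl
lemma e10 : eta 1 0 = 0 := rfl
lemma e11 : eta 1 1 = -1 := rfl
lemma e12 : eta 1 2 = 0 := rfl
lemma e13 : eta 1 3 = 0 := rfl
lemma e20 : eta 2 0 = 0 := rfl
lemma e21 : eta 2 1 = 0 := rfl
lemma e22 : eta 2 2 = -1 := rfl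
lemma e23 : eta 2 3 = 0 := rfl
lemma e30 : eta 3 0 = 0 := rfl
lemma e31 : eta 3 1 = 0 := rfl
lemma e32 : eta 3 2 = 0 := rfl
lemma e33 : eta 3 3 = -1 := rfl
lemma s0 : sgn 0 = 1 := rfl
lemma s1 : sgn 1 = -1 := rfl
lemma s2 : sgn 2 = -1 := rfl
lemma s3 : sgn 3 = -1 := rfl

set_option maxHeartbeats 4000000 in
/-- The key algebraic identity `F^{cab} ∂_c k_{ab} = G^{cab} ∂_c h_{ab}` in terms of
pointwise derivative data. -/
theorem key_alg (P Q : Fin 4 → Fin 4 → Fin 4 → ℝ)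
    (hP : ∀ c a b, P c a b = P c b a) (hQ : ∀ c a b, Q c a b = Q c b a) :
    (∑ c : Fin 4, ∑ a : Fin 4, ∑ b : Fin 4, sgn c * sgn a * sgn b * Fp P c a b * Q c a b)
    = ∑ c : Fin 4, ∑ a : Fin 4, ∑ b : Fin 4, sgn c * sgn a * sgn b * Fp Q c a b * P c a b := by
  simp only [Fp, Fin.sum_univ_four, e00, e01, e02, e03, e10, e11, e12, e13, e20, e21, e22, e23,
    e30, e31, e32, e33, s0, s1, s2, s3, mul_zero, zero_mul, mul_one, one_mul, add_zero, zero_add,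
    sub_zero, neg_neg, mul_neg, neg_mul]
  simp only [show ∀ c, P c 1 0 = P c 0 1 from fun c => hP c 1 0,
    show ∀ c, P c 2 0 = P c 0 2 from fun c => hP c 2 0,
    show ∀ c, P c 3 0 = P c 0 3 from fun c => hP c 3 0,
    show ∀ c, P c 2 1 = P c 1 2 from fun c => hP c 2 1,
    show ∀ c, P c 3 1 = P c 1 3 from fun c => hP c 3 1,
    show ∀ c, P c 3 2 = P c 2 3 from fun c => hP c 3 2,
    show ∀ c, Q c 1 0 = Q c 0 1 from fun c => hQ c 1 0,
    show ∀ c, Q c 2 0 = Q c 0 2 from fun c => hQ c 2 0,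
    show ∀ c, Q c 3 0 = Q c 0 3 from fun c => hQ c 3 0,
    show ∀ c, Q c 2 1 = Q c 1 2 from fun c => hQ c 2 1,
    show ∀ c, Q c 3 1 = Q c 1 3 from fun c => hQ c 3 1,
    show ∀ c, Q c 3 2 = Q c 2 3 from fun c => hQ c 3 2]
  ring

/-! ### Calculus lemmas for `pd` -/

lemma contDiff_pd {f : (Fin 4 → ℝ) → ℝ} (hf : ContDiff ℝ (⊤ : ℕ∞) f) (a : Fin 4) :
    ContDiff ℝ (⊤ : ℕ∞) (pd a f) := by
  have h1 : ContDiff ℝ (⊤ : ℕ∞) (fderiv ℝ f) := hf.fderiv_right (by simp)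
  exact h1.clm_apply contDiff_const

lemma dAt {f : (Fin 4 → ℝ) → ℝ} (hf : ContDiff ℝ (⊤ : ℕ∞) f) (x : Fin 4 → ℝ) :
    DifferentiableAt ℝ f x := (hf.differentiable (by simp)) x

lemma pd_sum {ι : Type*} (s : Finset ι) (f : ι → (Fin 4 → ℝ) → ℝ) (a : Fin 4) (x : Fin 4 → ℝ)
    (hf : ∀ i ∈ s, DifferentiableAt ℝ (f i) x) :
    pd a (fun y => ∑ i ∈ s, f i y) x = ∑ i ∈ s, pd a (f i) x := by
  unfold pd
  rw [fderiv_fun_sum hf]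
  simp

lemma pd_sub {f g : (Fin 4 → ℝ) → ℝ} (hf : DifferentiableAt ℝ f x)
    (hg : DifferentiableAt ℝ g x) (a : Fin 4) :
    pd a (fun y => f y - g y) x = pd a f x - pd a g x := by
  unfold pd
  rw [fderiv_fun_sub hf hg]
  simp

lemma pd_const_mul {f : (Fin 4 → ℝ) → ℝ} (hf : DifferentiableAt ℝ f x) (C : ℝ) (a : Fin 4) :
    pd a (fun y => C * f y) x = C * pd a f x := by
  unfold pd
  rw [fderiv_const_mul hf]
  simp

lemma pd_mul {f g : (Fin 4 → ℝ) → ℝ} (hf : DifferentiableAt ℝ f x)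
    (hg : DifferentiableAt ℝ g x) (a : Fin 4) :
    pd a (fun y => f y * g y) x = pd a f x * g x + f x * pd a g x := by
  unfold pd
  rw [fderiv_fun_mul hf hg]
  simp [smul_eq_mul]
  ring

/-! ### Smoothness of the ingredients -/

variable {h : (Fin 4 → ℝ) → Fin 4 → Fin 4 → ℝ}

lemma contDiff_trH (hsmh : ∀ a b : Fin 4, ContDiff ℝ (⊤ : ℕ∞) fun x => h x a b) :
    ContDiff ℝ (⊤ : ℕ∞) (trH h) := by
  apply ContDiff.sum; intro a _
  apply ContDiff.sum; intro b _
  exact contDiff_const.mul (hsmh a b)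

lemma contDiff_divH (hsmh : ∀ a b : Fin 4, ContDiff ℝ (⊤ : ℕ∞) fun x => h x a b) (a : Fin 4) :
    ContDiff ℝ (⊤ : ℕ∞) (divH h a) := by
  apply ContDiff.sum; intro d _
  apply ContDiff.sum; intro d' _
  exact contDiff_const.mul (contDiff_pd (hsmh d' a) d)

lemma contDiff_Fierz (hsmh : ∀ a b : Fin 4, ContDiff ℝ (⊤ : ℕ∞) fun x => h x a b) (a b c : Fin 4) :
    ContDiff ℝ (⊤ : ℕ∞) (Fierz h a b c) := by
  exact contDiff_const.mul ((((((contDiff_pd (hsmh b c) a).sub (contDiff_pd (hsmh a c) b)).add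
    ((contDiff_divH hsmh a).mul contDiff_const)).sub
    ((contDiff_divH hsmh b).mul contDiff_const)).sub
    ((contDiff_pd (contDiff_trH hsmh) a).mul contDiff_const)).add
    ((contDiff_pd (contDiff_trH hsmh) b).mul contDiff_const))

/-! ### Pointwise algebraic form of the Fierz tensor -/

lemma Fierz_apply (hsmh : ∀ a b : Fin 4, ContDiff ℝ (⊤ : ℕ∞) fun x => h x a b)
    (a b c : Fin 4) (x : Fin 4 → ℝ) :
    Fierz h a b c x = Fp (fun c' a' b' => pd c' (fun y => h y a' b') x) a b c := by
  have hdiv : ∀ a : Fin 4, divH h a x = ∑ d : Fin 4, sgn d * pd d (fun y => h y d a) x := by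
    intro a
    exact Finset.sum_congr rfl fun d _ => sum_eta d fun d' => pd d (fun y => h y d' a) x
  have htr : ∀ a : Fin 4, pd a (trH h) x = ∑ p : Fin 4, sgn p * pd a (fun y => h y p p) x := by
    intro a
    have h1 : pd a (trH h) x
        = ∑ p : Fin 4, pd a (fun y => ∑ q : Fin 4, eta p q * h y p q) x := by
      apply pd_sum
      intro p _
      exact dAt (ContDiff.sum fun q _ => contDiff_const.mul (hsmh p q)) x
    rw [h1]
    refine Finset.sum_congr rfl fun p _ => ?_
    have h2 : pd a (fun y => ∑ q : Fin 4, eta p q * h y p q) x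
        = ∑ q : Fin 4, eta p q * pd a (fun y => h y p q) x := by
      rw [pd_sum _ _ _ _ fun q _ => (dAt (hsmh p q) x).const_mul _]
      exact Finset.sum_congr rfl fun q _ => pd_const_mul (dAt (hsmh p q) x) _ a
    rw [h2, sum_eta p fun q => pd a (fun y => h y p q) x]
  show (1/2) * (pd a (fun y => h y b c) x - pd b (fun y => h y a c) x
    + divH h a x * eta b c - divH h b x * eta a c
    - pd a (trH h) x * eta b c + pd b (trH h) x * eta a c) = _
  rw [hdiv a, hdiv b, htr a, htr b]
  rfl

/-! ### Collapsing the metric contractions in `Jcur` -/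

lemma collapse5 (F : Fin 4 → Fin 4 → Fin 4 → ℝ) (G : Fin 4 → Fin 4 → ℝ) (c : Fin 4) :
    (∑ c' : Fin 4, ∑ a : Fin 4, ∑ a' : Fin 4, ∑ b : Fin 4, ∑ b' : Fin 4,
      eta c c' * eta a a' * eta b b' * F c' a' b' * G a b)
    = ∑ a : Fin 4, ∑ b : Fin 4, sgn c * sgn a * sgn b * F c a b * G a b := by
  rw [Finset.sum_eq_single c]
  · refine Finset.sum_congr rfl fun a _ => ?_
    rw [Finset.sum_eq_single a]
    · refine Finset.sum_congr rfl fun b _ => ?_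
      rw [Finset.sum_eq_single b]
      · rw [eta_diag, eta_diag, eta_diag]
      · intro b' _ hb; rw [eta_ne (Ne.symm hb)]; ring
      · simp
    · intro a' _ ha
      have h0 : eta a a' = 0 := eta_ne (Ne.symm ha)
      simp [h0]
    · simp
  · intro c' _ hc
    have h0 : eta c c' = 0 := eta_ne (Ne.symm hc)
    simp [h0]
  · simp

end BCCaux

open BCCaux in
/-- for two vacuum solutions of the linearized Einstein equations,
the current `J^c = F^{cab}k_{ab} − G^{cab}h_{ab}` is conserved: `∂_c J^c = 0`. -/
theorem bilinear_current_conserved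
    (h k : (Fin 4 → ℝ) → Fin 4 → Fin 4 → ℝ)
    (hsmh : ∀ a b : Fin 4, ContDiff ℝ (⊤ : ℕ∞) fun x => h x a b)
    (hsymh : ∀ x, ∀ a b : Fin 4, h x a b = h x b a)
    (hsmk : ∀ a b : Fin 4, ContDiff ℝ (⊤ : ℕ∞) fun x => k x a b)
    (hsymk : ∀ x, ∀ a b : Fin 4, k x a b = k x b a)
    (hEinh : ∀ x, ∀ a b : Fin 4,
      (∑ c : Fin 4, ∑ c' : Fin 4, eta c c' * pd c (fun y => Fierz h c' a b y) x) = 0)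
    (hEink : ∀ x, ∀ a b : Fin 4,
      (∑ c : Fin 4, ∑ c' : Fin 4, eta c c' * pd c (fun y => Fierz k c' a b y) x) = 0) :
    ∀ x, (∑ c : Fin 4, pd c (fun y => Jcur h k c y) x) = 0 := by
  intro x
  -- pointwise derivative data
  set P : Fin 4 → Fin 4 → Fin 4 → ℝ := fun c a b => pd c (fun y => h y a b) x with hPdef
  set Q : Fin 4 → Fin 4 → Fin 4 → ℝ := fun c a b => pd c (fun y => k y a b) x with hQdef
  have symP : ∀ c a b, P c a b = P c b a := by
    intro c a b
    have : (fun y => h y a b) = fun y => h y b a := funext fun y => hsymh y a b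
    simp only [hPdef, this]
  have symQ : ∀ c a b, Q c a b = Q c b a := by
    intro c a b
    have : (fun y => k y a b) = fun y => k y b a := funext fun y => hsymk y a b
    simp only [hQdef, this]
  -- rewrite of the current with contractions collapsed
  have Jeq : ∀ c : Fin 4, (fun y => Jcur h k c y)
      = fun y => ∑ a : Fin 4, ∑ b : Fin 4,
        (sgn c * sgn a * sgn b * Fierz h c a b y * k y a b
          - sgn c * sgn a * sgn b * Fierz k c a b y * h y a b) := by
    intro c
    funext y
    show Jcur h k c y = _
    unfold Jcur
    rw [collapse5 (fun c a b => Fierz h c a b y) (fun a b => k y a b) c,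
        collapse5 (fun c a b => Fierz k c a b y) (fun a b => h y a b) c,
        ← Finset.sum_sub_distrib]
    exact Finset.sum_congr rfl fun a _ => (Finset.sum_sub_distrib _ _).symm
  -- differentiability of summands
  have dF : ∀ c a b : Fin 4, DifferentiableAt ℝ (Fierz h c a b) x :=
    fun c a b => dAt (contDiff_Fierz hsmh c a b) x
  have dG : ∀ c a b : Fin 4, DifferentiableAt ℝ (Fierz k c a b) x :=
    fun c a b => dAt (contDiff_Fierz hsmk c a b) x
  have innerCD : ∀ c a b : Fin 4, ContDiff ℝ (⊤ : ℕ∞)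
      (fun y => sgn c * sgn a * sgn b * Fierz h c a b y * k y a b
        - sgn c * sgn a * sgn b * Fierz k c a b y * h y a b) := by
    intro c a b
    exact ((contDiff_const.mul (contDiff_Fierz hsmh c a b)).mul (hsmk a b)).sub
      ((contDiff_const.mul (contDiff_Fierz hsmk c a b)).mul (hsmh a b))
  -- product rule helper
  have prod_rule : ∀ (F K : (Fin 4 → ℝ) → ℝ) (C : ℝ), ContDiff ℝ (⊤ : ℕ∞) F → ContDiff ℝ (⊤ : ℕ∞) K →
      ∀ c : Fin 4, pd c (fun y => C * F y * K y) x
        = C * (pd c F x * K x + F x * pd c K x) := by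
    intro F K C hF hK c
    have h1 : (fun y => C * F y * K y) = fun y => C * (F y * K y) := by
      funext y; ring
    rw [h1, pd_const_mul (f := fun y => F y * K y) ((dAt hF x).mul (dAt hK x)) C c, pd_mul (dAt hF x) (dAt hK x) c]
  -- derivative of the current, term by term
  have step1 : ∀ c : Fin 4, pd c (fun y => Jcur h k c y) x
      = ∑ a : Fin 4, ∑ b : Fin 4,
        (sgn c * sgn a * sgn b * pd c (Fierz h c a b) x * k x a b
          + sgn c * sgn a * sgn b * Fierz h c a b x * Q c a b
          - sgn c * sgn a * sgn b * pd c (Fierz k c a b) x * h x a b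
          - sgn c * sgn a * sgn b * Fierz k c a b x * P c a b) := by
    intro c
    rw [Jeq c]
    rw [pd_sum _ _ _ _ fun a _ => dAt (ContDiff.sum fun b _ => innerCD c a b) x]
    refine Finset.sum_congr rfl fun a _ => ?_
    rw [pd_sum _ _ _ _ fun b _ => dAt (innerCD c a b) x]
    refine Finset.sum_congr rfl fun b _ => ?_
    rw [pd_sub (dAt ((contDiff_const.mul (contDiff_Fierz hsmh c a b)).mul (hsmk a b)) x)
      (dAt ((contDiff_const.mul (contDiff_Fierz hsmk c a b)).mul (hsmh a b)) x) c]
    rw [prod_rule (Fierz h c a b) (fun y => k y a b) _ (contDiff_Fierz hsmh c a b) (hsmk a b) c]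
    rw [prod_rule (Fierz k c a b) (fun y => h y a b) _ (contDiff_Fierz hsmk c a b) (hsmh a b) c]
    simp only [hPdef, hQdef]
    ring
  -- the Einstein-equation contractions vanish
  have hE'h : ∀ a b : Fin 4, ∑ c : Fin 4, sgn c * pd c (Fierz h c a b) x = 0 := by
    intro a b
    calc ∑ c : Fin 4, sgn c * pd c (Fierz h c a b) x
        = ∑ c : Fin 4, ∑ c' : Fin 4, eta c c' * pd c (fun y => Fierz h c' a b y) x :=
          Finset.sum_congr rfl fun c _ =>
            (sum_eta c fun c' => pd c (fun y => Fierz h c' a b y) x).symm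
      _ = 0 := hEinh x a b
  have hE'k : ∀ a b : Fin 4, ∑ c : Fin 4, sgn c * pd c (Fierz k c a b) x = 0 := by
    intro a b
    calc ∑ c : Fin 4, sgn c * pd c (Fierz k c a b) x
        = ∑ c : Fin 4, ∑ c' : Fin 4, eta c c' * pd c (fun y => Fierz k c' a b y) x :=
          Finset.sum_congr rfl fun c _ =>
            (sum_eta c fun c' => pd c (fun y => Fierz k c' a b y) x).symm
      _ = 0 := hEink x a b
  -- zero pieces
  have z1 : (∑ c : Fin 4, ∑ a : Fin 4, ∑ b : Fin 4,
      sgn c * sgn a * sgn b * pd c (Fierz h c a b) x * k x a b) = 0 := by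
    calc (∑ c : Fin 4, ∑ a : Fin 4, ∑ b : Fin 4,
        sgn c * sgn a * sgn b * pd c (Fierz h c a b) x * k x a b)
        = ∑ a : Fin 4, ∑ b : Fin 4, ∑ c : Fin 4,
          sgn c * sgn a * sgn b * pd c (Fierz h c a b) x * k x a b := by
          rw [Finset.sum_comm]
          exact Finset.sum_congr rfl fun a _ => Finset.sum_comm
      _ = 0 := by
          refine Finset.sum_eq_zero fun a _ => Finset.sum_eq_zero fun b _ => ?_
          calc (∑ c : Fin 4, sgn c * sgn a * sgn b * pd c (Fierz h c a b) x * k x a b)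
              = (sgn a * sgn b * k x a b) * ∑ c : Fin 4, sgn c * pd c (Fierz h c a b) x := by
                rw [Finset.mul_sum]
                exact Finset.sum_congr rfl fun c _ => by ring
            _ = 0 := by rw [hE'h a b, mul_zero]
  have z2 : (∑ c : Fin 4, ∑ a : Fin 4, ∑ b : Fin 4,
      sgn c * sgn a * sgn b * pd c (Fierz k c a b) x * h x a b) = 0 := by
    calc (∑ c : Fin 4, ∑ a : Fin 4, ∑ b : Fin 4,
        sgn c * sgn a * sgn b * pd c (Fierz k c a b) x * h x a b)
        = ∑ a : Fin 4, ∑ b : Fin 4, ∑ c : Fin 4,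
          sgn c * sgn a * sgn b * pd c (Fierz k c a b) x * h x a b := by
          rw [Finset.sum_comm]
          exact Finset.sum_congr rfl fun a _ => Finset.sum_comm
      _ = 0 := by
          refine Finset.sum_eq_zero fun a _ => Finset.sum_eq_zero fun b _ => ?_
          calc (∑ c : Fin 4, sgn c * sgn a * sgn b * pd c (Fierz k c a b) x * h x a b)
              = (sgn a * sgn b * h x a b) * ∑ c : Fin 4, sgn c * pd c (Fierz k c a b) x := by
                rw [Finset.mul_sum]
                exact Finset.sum_congr rfl fun c _ => by ring
            _ = 0 := by rw [hE'k a b, mul_zero]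
  -- the two bilinear pieces coincide
  have e34 : (∑ c : Fin 4, ∑ a : Fin 4, ∑ b : Fin 4,
      sgn c * sgn a * sgn b * Fierz h c a b x * Q c a b)
      = ∑ c : Fin 4, ∑ a : Fin 4, ∑ b : Fin 4,
        sgn c * sgn a * sgn b * Fierz k c a b x * P c a b := by
    calc (∑ c : Fin 4, ∑ a : Fin 4, ∑ b : Fin 4,
        sgn c * sgn a * sgn b * Fierz h c a b x * Q c a b)
        = ∑ c : Fin 4, ∑ a : Fin 4, ∑ b : Fin 4,
          sgn c * sgn a * sgn b * Fp P c a b * Q c a b := by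
          refine Finset.sum_congr rfl fun c _ => Finset.sum_congr rfl fun a _ =>
            Finset.sum_congr rfl fun b _ => ?_
          rw [Fierz_apply hsmh c a b x]
      _ = ∑ c : Fin 4, ∑ a : Fin 4, ∑ b : Fin 4,
          sgn c * sgn a * sgn b * Fp Q c a b * P c a b := key_alg P Q symP symQ
      _ = ∑ c : Fin 4, ∑ a : Fin 4, ∑ b : Fin 4,
          sgn c * sgn a * sgn b * Fierz k c a b x * P c a b := by
          refine Finset.sum_congr rfl fun c _ => Finset.sum_congr rfl fun a _ =>
            Finset.sum_congr rfl fun b _ => ?_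
          rw [Fierz_apply hsmk c a b x]
  -- assemble
  calc (∑ c : Fin 4, pd c (fun y => Jcur h k c y) x)
      = ∑ c : Fin 4, ∑ a : Fin 4, ∑ b : Fin 4,
        (sgn c * sgn a * sgn b * pd c (Fierz h c a b) x * k x a b
          + sgn c * sgn a * sgn b * Fierz h c a b x * Q c a b
          - sgn c * sgn a * sgn b * pd c (Fierz k c a b) x * h x a b
          - sgn c * sgn a * sgn b * Fierz k c a b x * P c a b) :=
        Finset.sum_congr rfl fun c _ => step1 c
    _ = (∑ c : Fin 4, ∑ a : Fin 4, ∑ b : Fin 4,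
          sgn c * sgn a * sgn b * pd c (Fierz h c a b) x * k x a b)
        + (∑ c : Fin 4, ∑ a : Fin 4, ∑ b : Fin 4,
          sgn c * sgn a * sgn b * Fierz h c a b x * Q c a b)
        - (∑ c : Fin 4, ∑ a : Fin 4, ∑ b : Fin 4,
          sgn c * sgn a * sgn b * pd c (Fierz k c a b) x * h x a b)
        - (∑ c : Fin 4, ∑ a : Fin 4, ∑ b : Fin 4,
          sgn c * sgn a * sgn b * Fierz k c a b x * P c a b) := by
        simp only [Finset.sum_sub_distrib, Finset.sum_add_distrib]
    _ = 0 := by rw [z1, z2, e34]; ring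
end
end
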